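/- Let B be a ℤ-graded bialgebra over a field k satisfying the twisting conditions, and let {α_i : B → k}_{i∈ℤ} be a family of linear functionals, each convolution invertible with inverse α_i^{-1}. Then the following are equivalent: (1) {α_i}_{i∈ℤ} is a system of twisting functionals on B; (2) the maps τ_i := Ξ^r[α_i] (i ∈ ℤ) form a twisting system of B, in which case each τ_i is bijective with inverse Ξ^r[α_i^{-1}]; (3) the maps τ_i := Ξ^l[α_i^{-1}] (i ∈ ℤ) form a twisting system of B, in which case each τ_i is bijective with inverse Ξ^l[α_i]. -/

import Mathlib

open TensorProduct

/-- Convolution product of linear functionals on a coalgebra. -/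
noncomputable def conv {k B : Type*} [CommSemiring k] [AddCommMonoid B] [Module k B]
    [Coalgebra k B] (f g : B →ₗ[k] k) : B →ₗ[k] k :=
  LinearMap.mul' k k ∘ₗ TensorProduct.map f g ∘ₗ Coalgebra.comul

/-- The right winding map `Ξ^r[π](b) = Σ b_1 π(b_2)`. -/
noncomputable def windR {k B : Type*} [CommSemiring k] [AddCommMonoid B] [Module k B]
    [Coalgebra k B] (π : B →ₗ[k] k) : B →ₗ[k] B :=
  (TensorProduct.rid k B).toLinearMap ∘ₗ TensorProduct.map LinearMap.id π ∘ₗ Coalgebra.comul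

/-- The left winding map `Ξ^l[π](b) = Σ π(b_1) b_2`. -/
noncomputable def windL {k B : Type*} [CommSemiring k] [AddCommMonoid B] [Module k B]
    [Coalgebra k B] (π : B →ₗ[k] k) : B →ₗ[k] B :=
  (TensorProduct.lid k B).toLinearMap ∘ₗ TensorProduct.map π LinearMap.id ∘ₗ Coalgebra.comul

/-- A system of twisting functionals on a ℤ-graded bialgebra `B`. -/
def IsTwistingFunctionalSystem {k B : Type*} [CommSemiring k] [Semiring B] [Bialgebra k B]
    (𝒜 : ℤ → Submodule k B) (α : ℤ → (B →ₗ[k] k)) : Prop :=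
  (∀ i : ℤ, ∃ αinv : B →ₗ[k] k, conv (α i) αinv = Coalgebra.counit ∧
    conv αinv (α i) = Coalgebra.counit) ∧
  (∀ i : ℤ, α i 1 = 1) ∧
  (α 0 = Coalgebra.counit) ∧
  (∀ (i j : ℤ), ∀ a ∈ 𝒜 j, ∀ b : B,
    conv ((α i) ∘ₗ LinearMap.mulLeft k a) (α j) b = α i a * α (i + j) b)

/-- A twisting system of a ℤ-graded algebra. -/
def IsTwistingSystem {k A : Type*} [CommSemiring k] [Semiring A] [Algebra k A]
    (𝒜 : ℤ → Submodule k A) (τ : ℤ → (A →ₗ[k] A)) : Prop :=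
  (∀ i : ℤ, Function.Bijective (τ i)) ∧
  (∀ (i n : ℤ), ∀ a ∈ 𝒜 n, τ i a ∈ 𝒜 n) ∧
  (τ 0 = LinearMap.id) ∧
  (∀ i : ℤ, τ i 1 = 1) ∧
  (∀ (i j : ℤ), ∀ a ∈ 𝒜 j, ∀ b : A, τ i (a * τ j b) = τ i a * τ (i + j) b)


/-!
Winding turns convolution into composition, `windR f ∘ windR g = windR (f * g)` and
`windL f ∘ windL g = windL (g * f)`, and is undone by the counit: `ε ∘ windR f = ε ∘ windL f = f`.
Applying the multiplicative counit to the twisting identity of `τ_i = windR α_i` gives the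
twisting-functional identity; conversely, since `Δ` respects the grading, the twisting-functional
identity applied to the Sweedler components of `a ∈ B_j` reassembles into the twisting identity.
The same argument ties `windL α_i⁻¹` to the mirror identity
`Σ α_j⁻¹(b_1) α_i⁻¹(a b_2) = α_i⁻¹(a) α_{i+j}⁻¹(b)`. The two identities are equivalent: the first
says `α_i(a b) = α_i(a) γ(b)` for `a ∈ B_j`, with `γ = α_{i+j} * α_j⁻¹`, and expanding
`ε(a) ε = (α_i * α_i⁻¹)(a ·)` over `Δ a` shows that `α_i⁻¹` then obeys the same rule with `γ⁻¹`.
-/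

open Coalgebra WithConv
open LinearMap (mulLeft)

section Coalgebra

variable {k B : Type*} [CommSemiring k] [AddCommMonoid B] [Module k B] [Coalgebra k B]

lemma conv_eq_ofConv_mul (f g : B →ₗ[k] k) : conv f g = (toConv f * toConv g).ofConv := rfl

lemma counit_eq_ofConv_one : (counit : B →ₗ[k] k) = (1 : WithConv (B →ₗ[k] k)).ofConv := by
  ext; simp

lemma conv_assoc (f g h : B →ₗ[k] k) : conv (conv f g) h = conv f (conv g h) :=
  congrArg ofConv (mul_assoc (toConv f) (toConv g) (toConv h))

@[simp]
lemma counit_conv (f : B →ₗ[k] k) : conv counit f = f := by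
  rw [counit_eq_ofConv_one]; exact congrArg ofConv (one_mul (toConv f))

@[simp]
lemma conv_counit (f : B →ₗ[k] k) : conv f counit = f := by
  rw [counit_eq_ofConv_one]; exact congrArg ofConv (mul_one (toConv f))

lemma smul_conv (c : k) (f g : B →ₗ[k] k) : conv (c • f) g = c • conv f g :=
  congrArg ofConv (smul_mul_assoc c (toConv f) (toConv g))

lemma conv_smul (c : k) (f g : B →ₗ[k] k) : conv f (c • g) = c • conv f g :=
  congrArg ofConv (mul_smul_comm c (toConv f) (toConv g))

lemma conv_sum {ι : Type*} (s : Finset ι) (f : B →ₗ[k] k) (g : ι → B →ₗ[k] k) :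
    conv f (∑ i ∈ s, g i) = ∑ i ∈ s, conv f (g i) := by
  simp only [conv_eq_ofConv_mul, toConv_sum, Finset.mul_sum, ofConv_sum]

lemma conv_eq_iff_eq_conv {f g g' h : B →ₗ[k] k} (hg : conv g g' = counit)
    (hg' : conv g' g = counit) : conv f g = h ↔ f = conv h g' := by
  constructor
  · rintro rfl; rw [conv_assoc, hg, conv_counit]
  · rintro rfl; rw [conv_assoc, hg', conv_counit]

lemma conv_eq_iff_eq_conv' {f g g' h : B →ₗ[k] k} (hg : conv g g' = counit)
    (hg' : conv g' g = counit) : conv g f = h ↔ f = conv g' h := by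
  constructor
  · rintro rfl; rw [← conv_assoc, hg', counit_conv]
  · rintro rfl; rw [← conv_assoc, hg, counit_conv]

lemma conv_conv_conv_eq_counit {g g' h h' : B →ₗ[k] k} (hg : conv g' g = counit)
    (hh : conv h h' = counit) : conv (conv h g') (conv g h') = counit := by
  rw [conv_assoc, ← conv_assoc g', hg, counit_conv, hh]

variable {ι : Type*} {b : B}

lemma Coalgebra.Repr.conv_apply (𝓡 : Repr k b ι) (f g : B →ₗ[k] k) :
    conv f g b = ∑ i ∈ 𝓡.index, f (𝓡.left i) * g (𝓡.right i) :=
  𝓡.convMul_apply (toConv f) (toConv g)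

lemma Coalgebra.Repr.windR_apply (𝓡 : Repr k b ι) (f : B →ₗ[k] k) :
    windR f b = ∑ i ∈ 𝓡.index, f (𝓡.right i) • 𝓡.left i := by
  simp [windR, ← 𝓡.eq]

lemma Coalgebra.Repr.windL_apply (𝓡 : Repr k b ι) (f : B →ₗ[k] k) :
    windL f b = ∑ i ∈ 𝓡.index, f (𝓡.left i) • 𝓡.right i := by
  simp [windL, ← 𝓡.eq]

lemma comp_windR (f g : B →ₗ[k] k) : f ∘ₗ windR g = conv f g := by
  ext b
  simp [(ℛ k b).windR_apply, (ℛ k b).conv_apply, mul_comm]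

lemma comp_windL (f g : B →ₗ[k] k) : f ∘ₗ windL g = conv g f := by
  ext b
  simp [(ℛ k b).windL_apply, (ℛ k b).conv_apply]

@[simp]
lemma counit_windR (f : B →ₗ[k] k) (b : B) : counit (R := k) (windR f b) = f b := by
  rw [← LinearMap.comp_apply, comp_windR, counit_conv]

@[simp]
lemma counit_windL (f : B →ₗ[k] k) (b : B) : counit (R := k) (windL f b) = f b := by
  rw [← LinearMap.comp_apply, comp_windL, conv_counit]

lemma windR_eq_rid_comp (g : B →ₗ[k] k) :
    windR g = (TensorProduct.rid k B).toLinearMap ∘ₗ g.lTensor B ∘ₗ comul := rfl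

lemma windL_eq_lid_comp (g : B →ₗ[k] k) :
    windL g = (TensorProduct.lid k B).toLinearMap ∘ₗ g.rTensor B ∘ₗ comul := rfl

@[simp]
lemma windR_counit : windR (counit : B →ₗ[k] k) = LinearMap.id := by
  ext b; simp [windR_eq_rid_comp]

@[simp]
lemma windL_counit : windL (counit : B →ₗ[k] k) = LinearMap.id := by
  ext b; simp [windL_eq_lid_comp]

lemma comul_comp_windR (g : B →ₗ[k] k) :
    comul ∘ₗ windR g = (windR g).lTensor B ∘ₗ comul := by
  have h₁ : comul ∘ₗ (TensorProduct.rid k B).toLinearMap ∘ₗ g.lTensor B =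
      (TensorProduct.rid k (B ⊗[k] B)).toLinearMap ∘ₗ g.lTensor (B ⊗[k] B) ∘ₗ
        comul.rTensor B := by
    ext x y; simp
  have h₂ : (TensorProduct.rid k (B ⊗[k] B)).toLinearMap ∘ₗ g.lTensor (B ⊗[k] B) ∘ₗ
      (TensorProduct.assoc k B B B).symm.toLinearMap =
        ((TensorProduct.rid k B).toLinearMap ∘ₗ g.lTensor B).lTensor B := by
    ext x y z; simp
  calc comul ∘ₗ windR g
      = (TensorProduct.rid k (B ⊗[k] B)).toLinearMap ∘ₗ g.lTensor (B ⊗[k] B) ∘ₗ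
          comul.rTensor B ∘ₗ comul := by
        simp only [windR_eq_rid_comp, ← LinearMap.comp_assoc, ← h₁]
    _ = (((TensorProduct.rid k B).toLinearMap ∘ₗ g.lTensor B).lTensor B ∘ₗ
          comul.lTensor B) ∘ₗ comul := by
        rw [← h₂, ← coassoc_symm]; simp only [LinearMap.comp_assoc]
    _ = (windR g).lTensor B ∘ₗ comul := by rw [← LinearMap.lTensor_comp]; rfl

lemma windR_comp_windR (f g : B →ₗ[k] k) : windR f ∘ₗ windR g = windR (conv f g) := by
  rw [← comp_windR, windR_eq_rid_comp f, windR_eq_rid_comp (f ∘ₗ windR g),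
    LinearMap.lTensor_comp]
  simp only [LinearMap.comp_assoc, comul_comp_windR]

lemma comul_comp_windL (g : B →ₗ[k] k) :
    comul ∘ₗ windL g = (windL g).rTensor B ∘ₗ comul := by
  have h₁ : comul ∘ₗ (TensorProduct.lid k B).toLinearMap ∘ₗ g.rTensor B =
      (TensorProduct.lid k (B ⊗[k] B)).toLinearMap ∘ₗ g.rTensor (B ⊗[k] B) ∘ₗ
        comul.lTensor B := by
    ext x y; simp
  have h₂ : (TensorProduct.lid k (B ⊗[k] B)).toLinearMap ∘ₗ g.rTensor (B ⊗[k] B) ∘ₗ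
      (TensorProduct.assoc k B B B).toLinearMap =
        ((TensorProduct.lid k B).toLinearMap ∘ₗ g.rTensor B).rTensor B := by
    ext x y z; simp [TensorProduct.smul_tmul']
  calc comul ∘ₗ windL g
      = (TensorProduct.lid k (B ⊗[k] B)).toLinearMap ∘ₗ g.rTensor (B ⊗[k] B) ∘ₗ
          comul.lTensor B ∘ₗ comul := by
        simp only [windL_eq_lid_comp, ← LinearMap.comp_assoc, ← h₁]
    _ = (((TensorProduct.lid k B).toLinearMap ∘ₗ g.rTensor B).rTensor B ∘ₗ
          comul.rTensor B) ∘ₗ comul := by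
        rw [← h₂, ← coassoc]; simp only [LinearMap.comp_assoc]
    _ = (windL g).rTensor B ∘ₗ comul := by rw [← LinearMap.rTensor_comp]; rfl

lemma windL_comp_windL (f g : B →ₗ[k] k) : windL f ∘ₗ windL g = windL (conv g f) := by
  rw [← comp_windL, windL_eq_lid_comp f, windL_eq_lid_comp (f ∘ₗ windL g),
    LinearMap.rTensor_comp]
  simp only [LinearMap.comp_assoc, comul_comp_windL]

lemma windR_smul (c : k) (f : B →ₗ[k] k) : windR (c • f) = c • windR f := by
  ext b; simp [(ℛ k b).windR_apply, Finset.smul_sum, smul_smul]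

lemma windL_smul (c : k) (f : B →ₗ[k] k) : windL (c • f) = c • windL f := by
  ext b; simp [(ℛ k b).windL_apply, Finset.smul_sum, smul_smul]

lemma windR_bijective {f g : B →ₗ[k] k} (hfg : conv f g = counit) (hgf : conv g f = counit) :
    Function.Bijective (windR f) :=
  Function.bijective_iff_has_inverse.2 ⟨windR g,
    fun b => by rw [← LinearMap.comp_apply, windR_comp_windR, hgf, windR_counit]; rfl,
    fun b => by rw [← LinearMap.comp_apply, windR_comp_windR, hfg, windR_counit]; rfl⟩

lemma windL_bijective {f g : B →ₗ[k] k} (hfg : conv f g = counit) (hgf : conv g f = counit) :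
    Function.Bijective (windL f) :=
  Function.bijective_iff_has_inverse.2 ⟨windL g,
    fun b => by rw [← LinearMap.comp_apply, windL_comp_windL, hfg, windL_counit]; rfl,
    fun b => by rw [← LinearMap.comp_apply, windL_comp_windL, hgf, windL_counit]; rfl⟩

lemma windR_eq_id_iff {f : B →ₗ[k] k} : windR f = LinearMap.id ↔ f = counit := by
  refine ⟨fun h => ?_, fun h => h ▸ windR_counit⟩
  rw [← counit_conv f, ← comp_windR, h, LinearMap.comp_id]

lemma windL_eq_id_iff {f : B →ₗ[k] k} : windL f = LinearMap.id ↔ f = counit := by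
  refine ⟨fun h => ?_, fun h => h ▸ windL_counit⟩
  rw [← conv_counit f, ← comp_windL, h, LinearMap.comp_id]

lemma exists_repr_mem {M : Submodule k B} {a : B}
    (ha : comul a ∈ LinearMap.range (mapIncl M M)) :
    ∃ 𝓡 : Repr k a (M × M), (∀ i, 𝓡.left i ∈ M) ∧ ∀ i, 𝓡.right i ∈ M := by
  obtain ⟨w, hw⟩ := ha
  obtain ⟨S, rfl⟩ := TensorProduct.exists_finset w
  exact ⟨⟨S, fun i => i.1, fun i => i.2, by simpa [mapIncl] using hw⟩,
    fun i => i.1.2, fun i => i.2.2⟩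

lemma windR_mem {M : Submodule k B} {a : B}
    (ha : comul a ∈ LinearMap.range (mapIncl M M)) (f : B →ₗ[k] k) :
    windR f a ∈ M := by
  obtain ⟨𝓡, hl, -⟩ := exists_repr_mem ha
  rw [𝓡.windR_apply]
  exact Submodule.sum_mem _ fun i _ => Submodule.smul_mem _ _ (hl i)

lemma windL_mem {M : Submodule k B} {a : B}
    (ha : comul a ∈ LinearMap.range (mapIncl M M)) (f : B →ₗ[k] k) :
    windL f a ∈ M := by
  obtain ⟨𝓡, -, hr⟩ := exists_repr_mem ha
  rw [𝓡.windL_apply]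
  exact Submodule.sum_mem _ fun i _ => Submodule.smul_mem _ _ (hr i)

end Coalgebra

section Bialgebra

variable {k B : Type*} [CommSemiring k] [Semiring B] [Bialgebra k B]

lemma windR_one (f : B →ₗ[k] k) : windR f 1 = f 1 • 1 := by
  simp [windR, Algebra.TensorProduct.one_def]

lemma windL_one (f : B →ₗ[k] k) : windL f 1 = f 1 • 1 := by
  simp [windL, Algebra.TensorProduct.one_def]

lemma conv_apply_one (f g : B →ₗ[k] k) : conv f g 1 = f 1 * g 1 := by
  simp [conv, Algebra.TensorProduct.one_def]

lemma windR_one_eq_one_iff {f : B →ₗ[k] k} : windR f 1 = 1 ↔ f 1 = 1 :=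
  ⟨fun h => by simpa using congrArg (counit (R := k)) h, fun h => by rw [windR_one, h, one_smul]⟩

lemma windL_one_eq_one_iff {f : B →ₗ[k] k} : windL f 1 = 1 ↔ f 1 = 1 :=
  ⟨fun h => by simpa using congrArg (counit (R := k)) h, fun h => by rw [windL_one, h, one_smul]⟩

lemma counit_comp_mulLeft (a : B) :
    counit ∘ₗ mulLeft k a = counit (R := k) a • (counit : B →ₗ[k] k) := by
  ext b; simp

lemma comp_mulLeft_sum_smul {ι : Type*} (f : B →ₗ[k] k) (s : Finset ι) (c : ι → k)
    (y : ι → B) :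
    f ∘ₗ mulLeft k (∑ i ∈ s, c i • y i) = ∑ i ∈ s, c i • f ∘ₗ mulLeft k (y i) := by
  ext b; simp [Finset.sum_mul]

variable {ι : Type*} {a : B}

lemma Coalgebra.Repr.windR_mul (𝓡 : Repr k a ι) (f : B →ₗ[k] k) (c : B) :
    windR f (a * c) = ∑ i ∈ 𝓡.index, 𝓡.left i * windR (f ∘ₗ mulLeft k (𝓡.right i)) c := by
  simp [(𝓡.mul (ℛ k c)).windR_apply, (ℛ k c).windR_apply, Finset.sum_product,
    Finset.mul_sum]

lemma Coalgebra.Repr.windL_mul (𝓡 : Repr k a ι) (f : B →ₗ[k] k) (c : B) :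
    windL f (a * c) = ∑ i ∈ 𝓡.index, 𝓡.right i * windL (f ∘ₗ mulLeft k (𝓡.left i)) c := by
  simp [(𝓡.mul (ℛ k c)).windL_apply, (ℛ k c).windL_apply, Finset.sum_product,
    Finset.mul_sum]

lemma Coalgebra.Repr.conv_comp_mulLeft (𝓡 : Repr k a ι) (f g : B →ₗ[k] k) :
    conv f g ∘ₗ mulLeft k a =
      ∑ i ∈ 𝓡.index, conv (f ∘ₗ mulLeft k (𝓡.left i))
        (g ∘ₗ mulLeft k (𝓡.right i)) := by
  ext c
  simp [(𝓡.mul (ℛ k c)).conv_apply, (ℛ k c).conv_apply, Finset.sum_product]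

end Bialgebra

section Twisting

variable {k B : Type*} [CommSemiring k] [Semiring B] [Bialgebra k B]

lemma windR_twist {M : Submodule k B} {f g h : B →ₗ[k] k}
    (H : ∀ a ∈ M, ∀ b, conv (f ∘ₗ mulLeft k a) g b = f a * h b) {a : B}
    (ha : comul a ∈ LinearMap.range (mapIncl M M)) (b : B) :
    windR f (a * windR g b) = windR f a * windR h b := by
  obtain ⟨𝓡, -, hr⟩ := exists_repr_mem ha
  rw [𝓡.windR_mul, 𝓡.windR_apply, Finset.sum_mul]
  refine Finset.sum_congr rfl fun i _ => ?_
  rw [← LinearMap.comp_apply (windR _), windR_comp_windR,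
    show conv _ g = f (𝓡.right i) • h from LinearMap.ext (H _ (hr i)), windR_smul,
    LinearMap.smul_apply, mul_smul_comm, smul_mul_assoc]

lemma windL_twist {M : Submodule k B} {f g h : B →ₗ[k] k}
    (H : ∀ a ∈ M, ∀ b, conv g (f ∘ₗ mulLeft k a) b = f a * h b) {a : B}
    (ha : comul a ∈ LinearMap.range (mapIncl M M)) (b : B) :
    windL f (a * windL g b) = windL f a * windL h b := by
  obtain ⟨𝓡, hl, -⟩ := exists_repr_mem ha
  rw [𝓡.windL_mul, 𝓡.windL_apply, Finset.sum_mul]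
  refine Finset.sum_congr rfl fun i _ => ?_
  rw [← LinearMap.comp_apply (windL _), windL_comp_windL,
    show conv g _ = f (𝓡.left i) • h from LinearMap.ext (H _ (hl i)), windL_smul,
    LinearMap.smul_apply, mul_smul_comm, smul_mul_assoc]

lemma conv_comp_mulLeft_apply_of_windR_twist {f g h : B →ₗ[k] k} {a : B}
    (H : ∀ b, windR f (a * windR g b) = windR f a * windR h b) (b : B) :
    conv (f ∘ₗ mulLeft k a) g b = f a * h b := by
  simpa [← comp_windR] using congrArg (counit (R := k)) (H b)

lemma conv_comp_mulLeft_apply_of_windL_twist {f g h : B →ₗ[k] k} {a : B}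
    (H : ∀ b, windL f (a * windL g b) = windL f a * windL h b) (b : B) :
    conv g (f ∘ₗ mulLeft k a) b = f a * h b := by
  simpa [← comp_windL] using congrArg (counit (R := k)) (H b)

lemma conv_comp_mulLeft_eq_iff {f g g' h : B →ₗ[k] k} (hg : conv g g' = counit)
    (hg' : conv g' g = counit) (a : B) :
    (∀ b, conv (f ∘ₗ mulLeft k a) g b = f a * h b) ↔
      ∀ b, f (a * b) = f a * conv h g' b :=
  calc (∀ b, conv (f ∘ₗ mulLeft k a) g b = f a * h b)
      ↔ conv (f ∘ₗ mulLeft k a) g = f a • h := by rw [LinearMap.ext_iff]; rfl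
    _ ↔ f ∘ₗ mulLeft k a = conv (f a • h) g' := conv_eq_iff_eq_conv hg hg'
    _ ↔ ∀ b, f (a * b) = f a * conv h g' b := by rw [smul_conv, LinearMap.ext_iff]; rfl

lemma conv_comp_mulLeft_eq_iff' {f g g' h : B →ₗ[k] k} (hg : conv g g' = counit)
    (hg' : conv g' g = counit) (a : B) :
    (∀ b, conv g (f ∘ₗ mulLeft k a) b = f a * h b) ↔
      ∀ b, f (a * b) = f a * conv g' h b :=
  calc (∀ b, conv g (f ∘ₗ mulLeft k a) b = f a * h b)
      ↔ conv g (f ∘ₗ mulLeft k a) = f a • h := by rw [LinearMap.ext_iff]; rfl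
    _ ↔ f ∘ₗ mulLeft k a = conv g' (f a • h) := conv_eq_iff_eq_conv' hg hg'
    _ ↔ ∀ b, f (a * b) = f a * conv g' h b := by rw [conv_smul, LinearMap.ext_iff]; rfl

lemma map_mul_eq_of_conv_inverse {M : Submodule k B}
    (hM : ∀ a ∈ M, comul a ∈ LinearMap.range (mapIncl M M))
    {α β γ γ' : B →ₗ[k] k} (hαβ : conv α β = counit) (hβα : conv β α = counit)
    (hγ : conv γ' γ = counit) (H : ∀ a ∈ M, ∀ b, α (a * b) = α a * γ b) :
    ∀ a ∈ M, ∀ b, β (a * b) = β a * γ' b := by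
  intro a ha
  -- Write `a = windL α a'` and expand `ε(a') ε = (α * β)(a' ·)` over `Δ a'` to get `γ * β(a ·)`.
  set a' := windL β a
  have ha' : windL α a' = a := by
    rw [← LinearMap.comp_apply, windL_comp_windL, hβα, windL_counit, LinearMap.id_apply]
  obtain ⟨𝓡, hl, -⟩ := exists_repr_mem (hM a' (windL_mem (hM a ha) β))
  have hγβ : conv γ (β ∘ₗ mulLeft k a) = counit (R := k) a' • counit :=
    calc conv γ (β ∘ₗ mulLeft k a)
        = ∑ i ∈ 𝓡.index, conv (α (𝓡.left i) • γ) (β ∘ₗ mulLeft k (𝓡.right i)) := by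
          rw [← ha', 𝓡.windL_apply, comp_mulLeft_sum_smul, conv_sum]
          simp only [conv_smul, smul_conv]
      _ = conv α β ∘ₗ mulLeft k a' := by
          rw [𝓡.conv_comp_mulLeft]
          exact Finset.sum_congr rfl fun i _ => congrArg₂ conv (LinearMap.ext (H _ (hl i))).symm rfl
      _ = counit (R := k) a' • counit := by rw [hαβ, counit_comp_mulLeft]
  have hβ : β ∘ₗ mulLeft k a = β a • γ' := by
    rw [← counit_conv (β ∘ₗ _), ← hγ, conv_assoc, hγβ, conv_smul, conv_counit, counit_windL]
  exact fun b => LinearMap.congr_fun hβ b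

end Twisting

/-- The mirror image of `IsTwistingFunctionalSystem`, satisfied by the convolution inverses of
a system of twisting functionals. -/
def IsLeftTwistingFunctionalSystem {k B : Type*} [CommSemiring k] [Semiring B] [Bialgebra k B]
    (𝒜 : ℤ → Submodule k B) (β : ℤ → (B →ₗ[k] k)) : Prop :=
  (∀ i : ℤ, ∃ βinv : B →ₗ[k] k, conv (β i) βinv = counit ∧ conv βinv (β i) = counit) ∧
  (∀ i : ℤ, β i 1 = 1) ∧
  (β 0 = counit) ∧
  (∀ (i j : ℤ), ∀ a ∈ 𝒜 j, ∀ b : B,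
    conv (β j) (β i ∘ₗ mulLeft k a) b = β i a * β (i + j) b)

section GradedBialgebra

variable {k B : Type*} [CommSemiring k] [Semiring B] [Bialgebra k B] {𝒜 : ℤ → Submodule k B}

theorem isTwistingFunctionalSystem_iff_isTwistingSystem_windR
    (h𝒜 : ∀ n : ℤ, ∀ b ∈ 𝒜 n, comul b ∈ LinearMap.range (mapIncl (𝒜 n) (𝒜 n)))
    {α : ℤ → B →ₗ[k] k} (hα : ∀ i, ∃ β, conv (α i) β = counit ∧ conv β (α i) = counit) :
    IsTwistingFunctionalSystem 𝒜 α ↔ IsTwistingSystem 𝒜 (fun i => windR (α i)) := by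
  constructor
  · rintro ⟨-, h1, h0, ht⟩
    refine ⟨fun i => ?_, fun i n a ha => windR_mem (h𝒜 n a ha) _, windR_eq_id_iff.2 h0,
      fun i => windR_one_eq_one_iff.2 (h1 i), fun i j a ha => windR_twist (ht i j) (h𝒜 j a ha)⟩
    obtain ⟨β, hαβ, hβα⟩ := hα i
    exact windR_bijective hαβ hβα
  · rintro ⟨-, -, h0, h1, ht⟩
    exact ⟨hα, fun i => windR_one_eq_one_iff.1 (h1 i), windR_eq_id_iff.1 h0,
      fun i j a ha => conv_comp_mulLeft_apply_of_windR_twist (ht i j a ha)⟩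

theorem isLeftTwistingFunctionalSystem_iff_isTwistingSystem_windL
    (h𝒜 : ∀ n : ℤ, ∀ b ∈ 𝒜 n, comul b ∈ LinearMap.range (mapIncl (𝒜 n) (𝒜 n)))
    {β : ℤ → B →ₗ[k] k} (hβ : ∀ i, ∃ α, conv (β i) α = counit ∧ conv α (β i) = counit) :
    IsLeftTwistingFunctionalSystem 𝒜 β ↔ IsTwistingSystem 𝒜 (fun i => windL (β i)) := by
  constructor
  · rintro ⟨-, h1, h0, ht⟩
    refine ⟨fun i => ?_, fun i n a ha => windL_mem (h𝒜 n a ha) _, windL_eq_id_iff.2 h0,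
      fun i => windL_one_eq_one_iff.2 (h1 i), fun i j a ha => windL_twist (ht i j) (h𝒜 j a ha)⟩
    obtain ⟨α, hβα, hαβ⟩ := hβ i
    exact windL_bijective hβα hαβ
  · rintro ⟨-, -, h0, h1, ht⟩
    exact ⟨hβ, fun i => windL_one_eq_one_iff.1 (h1 i), windL_eq_id_iff.1 h0,
      fun i j a ha => conv_comp_mulLeft_apply_of_windL_twist (ht i j a ha)⟩

theorem isTwistingFunctionalSystem_iff_isLeftTwistingFunctionalSystem
    (h𝒜 : ∀ n : ℤ, ∀ b ∈ 𝒜 n, comul b ∈ LinearMap.range (mapIncl (𝒜 n) (𝒜 n)))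
    {α β : ℤ → B →ₗ[k] k} (hαβ : ∀ i, conv (α i) (β i) = counit ∧ conv (β i) (α i) = counit) :
    IsTwistingFunctionalSystem 𝒜 α ↔ IsLeftTwistingFunctionalSystem 𝒜 β := by
  have one (i : ℤ) : α i 1 = 1 ↔ β i 1 = 1 := by
    have h := conv_apply_one (α i) (β i)
    rw [(hαβ i).1, Bialgebra.counit_one] at h
    constructor <;> intro h' <;> simp_all
  have zero : α 0 = counit ↔ β 0 = counit := by
    constructor <;> intro h
    · simpa [h] using (hαβ 0).1
    · simpa [h] using (hαβ 0).1
  have twist (i j : ℤ) :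
      (∀ a ∈ 𝒜 j, ∀ b, conv (α i ∘ₗ mulLeft k a) (α j) b = α i a * α (i + j) b) ↔
        ∀ a ∈ 𝒜 j, ∀ b, conv (β j) (β i ∘ₗ mulLeft k a) b = β i a * β (i + j) b := by
    simp only [conv_comp_mulLeft_eq_iff (hαβ j).1 (hαβ j).2,
      conv_comp_mulLeft_eq_iff' (hαβ j).2 (hαβ j).1]
    exact ⟨map_mul_eq_of_conv_inverse (h𝒜 j) (hαβ i).1 (hαβ i).2
        (conv_conv_conv_eq_counit (hαβ (i + j)).2 (hαβ j).1),
      map_mul_eq_of_conv_inverse (h𝒜 j) (hαβ i).2 (hαβ i).1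
        (conv_conv_conv_eq_counit (hαβ j).2 (hαβ (i + j)).1)⟩
  exact ⟨fun ⟨_, h1, h0, ht⟩ => ⟨fun i => ⟨α i, (hαβ i).symm⟩, fun i => (one i).1 (h1 i),
      zero.1 h0, fun i j => (twist i j).1 (ht i j)⟩,
    fun ⟨_, h1, h0, ht⟩ => ⟨fun i => ⟨β i, hαβ i⟩, fun i => (one i).2 (h1 i),
      zero.2 h0, fun i j => (twist i j).2 (ht i j)⟩⟩

end GradedBialgebra

theorem statement9_general {k B : Type*} [Field k] [Ring B] [Bialgebra k B]
    (𝒜 : ℤ → Submodule k B)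
    (hT2 : ∀ n : ℤ, ∀ b ∈ 𝒜 n,
      Coalgebra.comul (R := k) b ∈ LinearMap.range (TensorProduct.mapIncl (𝒜 n) (𝒜 n)))
    (α αinv : ℤ → (B →ₗ[k] k))
    (hinv : ∀ i : ℤ, conv (α i) (αinv i) = Coalgebra.counit ∧
      conv (αinv i) (α i) = Coalgebra.counit) :
    (IsTwistingFunctionalSystem 𝒜 α ↔ IsTwistingSystem 𝒜 (fun i => windR (α i))) ∧
    (IsTwistingFunctionalSystem 𝒜 α ↔ IsTwistingSystem 𝒜 (fun i => windL (αinv i))) ∧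
    (IsTwistingFunctionalSystem 𝒜 α →
      ∀ i : ℤ,
        windR (α i) ∘ₗ windR (αinv i) = LinearMap.id ∧
        windR (αinv i) ∘ₗ windR (α i) = LinearMap.id ∧
        windL (αinv i) ∘ₗ windL (α i) = LinearMap.id ∧
        windL (α i) ∘ₗ windL (αinv i) = LinearMap.id) := by
  refine ⟨isTwistingFunctionalSystem_iff_isTwistingSystem_windR hT2 fun i => ⟨αinv i, hinv i⟩,
    (isTwistingFunctionalSystem_iff_isLeftTwistingFunctionalSystem hT2 hinv).trans
      (isLeftTwistingFunctionalSystem_iff_isTwistingSystem_windL hT2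
        fun i => ⟨α i, (hinv i).symm⟩),
    fun _ i => ⟨?_, ?_, ?_, ?_⟩⟩
  · rw [windR_comp_windR, (hinv i).1, windR_counit]
  · rw [windR_comp_windR, (hinv i).2, windR_counit]
  · rw [windL_comp_windL, (hinv i).1, windL_counit]
  · rw [windL_comp_windL, (hinv i).2, windL_counit]

/-- For a ℤ-graded bialgebra `B` satisfying the twisting conditions and a
family `α` of convolution-invertible functionals with inverses `αinv`, the following are
equivalent: (1) `α` is a system of twisting functionals; (2) `Ξ^r[α_i]` is a twisting
system; (3) `Ξ^l[αinv_i]` is a twisting system.  In either case the indicated winding maps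
are bijective with the indicated inverses. -/
theorem statement9 {k B : Type*} [Field k] [Ring B] [Bialgebra k B]
    (𝒜 : ℤ → Submodule k B) [GradedAlgebra 𝒜]
    (hT2 : ∀ n : ℤ, ∀ b ∈ 𝒜 n,
      Coalgebra.comul (R := k) b ∈ LinearMap.range (TensorProduct.mapIncl (𝒜 n) (𝒜 n)))
    (α αinv : ℤ → (B →ₗ[k] k))
    (hinv : ∀ i : ℤ, conv (α i) (αinv i) = Coalgebra.counit ∧
      conv (αinv i) (α i) = Coalgebra.counit) :
    (IsTwistingFunctionalSystem 𝒜 α ↔ IsTwistingSystem 𝒜 (fun i => windR (α i))) ∧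
    (IsTwistingFunctionalSystem 𝒜 α ↔ IsTwistingSystem 𝒜 (fun i => windL (αinv i))) ∧
    (IsTwistingFunctionalSystem 𝒜 α →
      ∀ i : ℤ,
        windR (α i) ∘ₗ windR (αinv i) = LinearMap.id ∧
        windR (αinv i) ∘ₗ windR (α i) = LinearMap.id ∧
        windL (αinv i) ∘ₗ windL (α i) = LinearMap.id ∧
        windL (α i) ∘ₗ windL (αinv i) = LinearMap.id) :=
  statement9_general 𝒜 hT2 α αinv hinv
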